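/- Let Ω be a domain in ℂ that is convex in the positive direction and contained in a horizontal strip, and let h be a Koenigs map onto Ω. Then for every λ ∈ ℂ with λ ≠ 0 one has D(e^{λh}) < ∞ if and only if Re λ < 0 and ∫_{-∞}^0 e^{2 Re λ · x} ℓ_Ω(x) dx < ∞. (Lemma 3.7 combined with Lemma 3.4: the slice-length criterion for the nonzero point spectrum on the Dirichlet space in the hyperbolic case.) -/

import Mathlib

open MeasureTheory Set Complex Metric
open scoped ENNReal NNReal

noncomputable section

/-- The Dirichlet integral `D(f) = ∫_𝔻 |f'(z)|² dA(z)` over the unit disk. -/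
def dirichletIntegral (f : ℂ → ℂ) : ℝ≥0∞ :=
  ∫⁻ z in ball (0 : ℂ) 1, (‖deriv f z‖₊ : ℝ≥0∞) ^ 2

/-- `h` is a Koenigs map onto `Ω`: an injective holomorphic map on the unit disk with image `Ω`. -/
def IsKoenigsMap (h : ℂ → ℂ) (Ω : Set ℂ) : Prop :=
  DifferentiableOn ℂ h (ball 0 1) ∧ InjOn h (ball 0 1) ∧ h '' ball 0 1 = Ω

/-- `Ω` is convex in the positive direction: `Ω + t ⊆ Ω` for all `t ≥ 0`. -/
def ConvexPosDir (Ω : Set ℂ) : Prop :=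
  ∀ t : ℝ, 0 ≤ t → ∀ w ∈ Ω, w + (t : ℂ) ∈ Ω

/-- `ℓ_Ω(x)`: one-dimensional Lebesgue measure of the vertical slice `{y : x + iy ∈ Ω}`. -/
def sliceLen (Ω : Set ℂ) (x : ℝ) : ℝ≥0∞ :=
  volume {y : ℝ | (x : ℂ) + (y : ℂ) * Complex.I ∈ Ω}

/-! Substituting `w = h z`, and using that `|h'|²` is the real Jacobian of `h`, gives
`D(e^{λh}) = |λ|² ∫_Ω e^{2 Re (λ w)} dA(w)`. In a horizontal strip `Re (λ w)` and
`Re λ · Re w` differ by a bounded amount, and Fubini turns `∫_Ω e^{2 Re λ · Re w} dA(w)` into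
`∫_ℝ e^{2 Re λ · x} ℓ_Ω(x) dx`. The slices have length at most the width of the strip and, by
convexity in the positive direction, at least the diameter of any disc in `Ω` to the right of
its centre, so the integral over `[0, ∞)` is finite exactly when `Re λ < 0`. -/

lemma det_restrictScalars_smulRight_one (c : ℂ) :
    (((1 : ℂ →L[ℂ] ℂ).smulRight c).restrictScalars ℝ).det = Complex.normSq c := by
  have : ((((1 : ℂ →L[ℂ] ℂ).smulRight c).restrictScalars ℝ) : ℂ →ₗ[ℝ] ℂ) =
      Algebra.lmul ℝ ℂ c := by
    ext z; simp [mul_comm]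
  rw [ContinuousLinearMap.det, this, ← Algebra.norm_apply, Algebra.norm_complex_apply]

theorem lintegral_image_eq_lintegral_normSq_deriv_mul {U : Set ℂ} (hU : IsOpen U) {f : ℂ → ℂ}
    (hf : DifferentiableOn ℂ f U) (hinj : InjOn f U) (g : ℂ → ℝ≥0∞) :
    ∫⁻ w in f '' U, g w = ∫⁻ z in U, ENNReal.ofReal (Complex.normSq (deriv f z)) * g (f z) := by
  have hf' : ∀ z ∈ U, HasFDerivWithinAt f
      (((1 : ℂ →L[ℂ] ℂ).smulRight (deriv f z)).restrictScalars ℝ) U z := fun z hz =>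
    ((hf.differentiableAt (hU.mem_nhds hz)).hasDerivAt.hasFDerivAt.restrictScalars ℝ
      ).hasFDerivWithinAt
  simp only [lintegral_image_eq_lintegral_abs_det_fderiv_mul volume hU.measurableSet hf' hinj g,
    det_restrictScalars_smulRight_one, abs_of_nonneg (Complex.normSq_nonneg _)]

lemma nnnorm_sq_eq_ofReal_normSq (w : ℂ) :
    (‖w‖₊ : ℝ≥0∞) ^ 2 = ENNReal.ofReal (Complex.normSq w) := by
  rw [Complex.normSq_eq_norm_sq, ENNReal.ofReal_pow (norm_nonneg w),
    ← coe_nnnorm, ENNReal.ofReal_coe_nnreal]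

lemma normSq_exp (w : ℂ) : Complex.normSq (Complex.exp w) = Real.exp (2 * w.re) := by
  rw [Complex.normSq_eq_norm_sq, Complex.norm_exp, two_mul, Real.exp_add, sq]

theorem dirichletIntegral_exp_const_mul {h : ℂ → ℂ} (hd : DifferentiableOn ℂ h (ball 0 1))
    (hinj : InjOn h (ball 0 1)) (lam : ℂ) :
    dirichletIntegral (fun z => Complex.exp (lam * h z)) =
      ENNReal.ofReal (Complex.normSq lam) *
        ∫⁻ w in h '' ball 0 1, ENNReal.ofReal (Real.exp (2 * (lam * w).re)) := by
  rw [lintegral_image_eq_lintegral_normSq_deriv_mul isOpen_ball hd hinj,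
    ← lintegral_const_mul' _ _ ENNReal.ofReal_ne_top, dirichletIntegral]
  refine setLIntegral_congr_fun measurableSet_ball fun z hz => ?_
  have hderiv : deriv (fun z => Complex.exp (lam * h z)) z =
      Complex.exp (lam * h z) * (lam * deriv h z) :=
    (((hd.differentiableAt (isOpen_ball.mem_nhds hz)).hasDerivAt.const_mul lam).cexp).deriv
  rw [hderiv, nnnorm_sq_eq_ofReal_normSq, ← ENNReal.ofReal_mul (Complex.normSq_nonneg _),
    ← ENNReal.ofReal_mul (Complex.normSq_nonneg _), Complex.normSq_mul, Complex.normSq_mul,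
    normSq_exp]
  ring_nf

theorem setLIntegral_comp_re_eq_lintegral_mul_sliceLen {Ω : Set ℂ} (hΩ : MeasurableSet Ω)
    {g : ℝ → ℝ≥0∞} (hg : Measurable g) :
    ∫⁻ w in Ω, g w.re = ∫⁻ x, g x * sliceLen Ω x := by
  have hmeas : Measurable fun p : ℝ × ℝ =>
      Ω.indicator (fun w => g w.re) (Complex.measurableEquivRealProd.symm p) :=
    ((hg.comp Complex.measurable_re).indicator hΩ).comp
      Complex.measurableEquivRealProd.symm.measurable
  rw [← lintegral_indicator hΩ,
    ← Complex.volume_preserving_equiv_real_prod.symm.lintegral_comp_emb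
      Complex.measurableEquivRealProd.symm.measurableEmbedding,
    Measure.volume_eq_prod, lintegral_prod _ hmeas.aemeasurable]
  refine lintegral_congr fun x => ?_
  have hslice : MeasurableSet {y : ℝ | (x : ℂ) + (y : ℂ) * Complex.I ∈ Ω} :=
    hΩ.preimage (by fun_prop)
  rw [sliceLen, ← lintegral_indicator_const hslice]
  refine lintegral_congr fun y => ?_
  have hxy : Complex.measurableEquivRealProd.symm (x, y) = (x : ℂ) + (y : ℂ) * Complex.I := by
    apply Complex.ext <;> simp [Complex.measurableEquivRealProd]
  by_cases hy : (x : ℂ) + (y : ℂ) * Complex.I ∈ Ω <;> simp [hxy, hy]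

lemma ofReal_exp_le_mul_ofReal_exp {u v M : ℝ} (h : u - v ≤ M) :
    ENNReal.ofReal (Real.exp u) ≤ ENNReal.ofReal (Real.exp M) * ENNReal.ofReal (Real.exp v) := by
  rw [← ENNReal.ofReal_mul (Real.exp_nonneg _), ← Real.exp_add]
  exact ENNReal.ofReal_le_ofReal (Real.exp_le_exp.2 (by linarith))

lemma setLIntegral_lt_top_of_le_const_mul {α : Type*} [MeasurableSpace α] {μ : Measure α}
    {s : Set α} (hs : MeasurableSet s) {f g : α → ℝ≥0∞} {C : ℝ≥0∞} (hC : C ≠ ⊤)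
    (hfg : ∀ x ∈ s, f x ≤ C * g x) (hg : ∫⁻ x in s, g x ∂μ < ⊤) : ∫⁻ x in s, f x ∂μ < ⊤ :=
  calc ∫⁻ x in s, f x ∂μ ≤ ∫⁻ x in s, C * g x ∂μ := setLIntegral_mono' hs hfg
    _ = C * ∫⁻ x in s, g x ∂μ := lintegral_const_mul' _ _ hC
    _ < ⊤ := ENNReal.mul_lt_top hC.lt_top hg

theorem setLIntegral_exp_re_mul_lt_top_iff {Ω : Set ℂ} (hΩ : MeasurableSet Ω) {R : ℝ}
    (hR : ∀ w ∈ Ω, |w.im| ≤ R) (lam : ℂ) :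
    ∫⁻ w in Ω, ENNReal.ofReal (Real.exp (2 * (lam * w).re)) < ⊤ ↔
      ∫⁻ w in Ω, ENNReal.ofReal (Real.exp (2 * lam.re * w.re)) < ⊤ := by
  have hdiff : ∀ w ∈ Ω, |2 * (lam * w).re - 2 * lam.re * w.re| ≤ 2 * (|lam.im| * R) := by
    intro w hw
    rw [Complex.mul_re, show 2 * (lam.re * w.re - lam.im * w.im) - 2 * lam.re * w.re =
      -(2 * (lam.im * w.im)) by ring, abs_neg, abs_mul, abs_two, abs_mul]
    gcongr
    exact hR w hw
  exact ⟨setLIntegral_lt_top_of_le_const_mul hΩ ENNReal.ofReal_ne_top fun w hw =>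
      ofReal_exp_le_mul_ofReal_exp
        ((le_abs_self _).trans ((abs_sub_comm _ _).trans_le (hdiff w hw))),
    setLIntegral_lt_top_of_le_const_mul hΩ ENNReal.ofReal_ne_top fun w hw =>
      ofReal_exp_le_mul_ofReal_exp ((le_abs_self _).trans (hdiff w hw))⟩

lemma sliceLen_le_of_subset_strip {Ω : Set ℂ} {a b : ℝ}
    (hab : Ω ⊆ {w : ℂ | a < w.im ∧ w.im < b}) (x : ℝ) : sliceLen Ω x ≤ ENNReal.ofReal (b - a) :=
  calc sliceLen Ω x ≤ volume (Ioo a b) := measure_mono fun y hy => by simpa using hab hy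
    _ = ENNReal.ofReal (b - a) := Real.volume_Ioo

lemma ConvexPosDir.ofReal_two_mul_le_sliceLen {Ω : Set ℂ} (hconv : ConvexPosDir Ω) {w₀ : ℂ}
    {r : ℝ} (hball : ball w₀ r ⊆ Ω) {x : ℝ} (hx : w₀.re ≤ x) :
    ENNReal.ofReal (2 * r) ≤ sliceLen Ω x := by
  have hsub : Ioo (w₀.im - r) (w₀.im + r) ⊆ {y : ℝ | (x : ℂ) + (y : ℂ) * Complex.I ∈ Ω} := by
    rintro y ⟨hy₁, hy₂⟩
    have hmem : w₀ + ((y - w₀.im : ℝ) : ℂ) * Complex.I ∈ Ω := hball <| by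
      rw [mem_ball, dist_eq_norm, add_sub_cancel_left, norm_mul, Complex.norm_real,
        Real.norm_eq_abs, Complex.norm_I, mul_one, abs_sub_lt_iff]
      constructor <;> linarith
    have heq : w₀ + ((y - w₀.im : ℝ) : ℂ) * Complex.I + ((x - w₀.re : ℝ) : ℂ) =
        (x : ℂ) + (y : ℂ) * Complex.I := by
      apply Complex.ext <;> simp
    show (x : ℂ) + (y : ℂ) * Complex.I ∈ Ω
    rw [← heq]
    exact hconv (x - w₀.re) (by linarith) _ hmem
  calc ENNReal.ofReal (2 * r) = volume (Ioo (w₀.im - r) (w₀.im + r)) := by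
        rw [Real.volume_Ioo]; ring_nf
    _ ≤ sliceLen Ω x := measure_mono hsub

lemma setLIntegral_Ici_exp_mul_lt_top {c : ℝ} (hc : c < 0) {ℓ : ℝ → ℝ≥0∞} {L : ℝ≥0∞}
    (hL : L ≠ ⊤) (hℓ : ∀ x, ℓ x ≤ L) :
    ∫⁻ x in Ici 0, ENNReal.ofReal (Real.exp (c * x)) * ℓ x < ⊤ := by
  have hexp : ∫⁻ x in Ici 0, ENNReal.ofReal (Real.exp (c * x)) < ⊤ := by
    have hint : IntegrableOn (fun x => Real.exp (c * x)) (Ioi 0) := by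
      simpa using exp_neg_integrableOn_Ioi 0 (neg_pos.2 hc)
    rw [← setLIntegral_congr Ioi_ae_eq_Ici, ← hasFiniteIntegral_iff_ofReal
      (ae_of_all _ fun x => Real.exp_nonneg _)]
    exact hint.2
  refine setLIntegral_lt_top_of_le_const_mul measurableSet_Ici hL (fun x _ => ?_) hexp
  rw [mul_comm L]
  exact mul_le_mul_right (hℓ x) _

lemma setLIntegral_Ici_exp_mul_eq_top {c : ℝ} (hc : 0 ≤ c) {ℓ : ℝ → ℝ≥0∞} {x₀ : ℝ}
    {δ : ℝ≥0∞} (hδ : δ ≠ 0) (hℓ : ∀ x, x₀ ≤ x → δ ≤ ℓ x) :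
    ∫⁻ x in Ici 0, ENNReal.ofReal (Real.exp (c * x)) * ℓ x = ⊤ := by
  set x₁ := max 0 x₀
  have hδle : ∀ x ∈ Ici x₁, δ ≤ ENNReal.ofReal (Real.exp (c * x)) * ℓ x := fun x hx => by
    have hexp : 1 ≤ ENNReal.ofReal (Real.exp (c * x)) := by
      rw [ENNReal.one_le_ofReal, Real.one_le_exp_iff]
      exact mul_nonneg hc ((le_max_left _ _).trans hx)
    simpa using mul_le_mul' hexp (hℓ x ((le_max_right _ _).trans hx))
  refine top_le_iff.1 ?_
  calc ⊤ = ∫⁻ _ in Ici x₁, δ := by simp [Real.volume_Ici, hδ]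
    _ ≤ ∫⁻ x in Ici x₁, ENNReal.ofReal (Real.exp (c * x)) * ℓ x :=
      setLIntegral_mono' measurableSet_Ici hδle
    _ ≤ _ := lintegral_mono_set (Ici_subset_Ici.2 (le_max_left _ _))

theorem lintegral_exp_mul_lt_top_iff {ℓ : ℝ → ℝ≥0∞} {L δ : ℝ≥0∞} {x₀ : ℝ} (hL : L ≠ ⊤)
    (hℓL : ∀ x, ℓ x ≤ L) (hδ : δ ≠ 0) (hδℓ : ∀ x, x₀ ≤ x → δ ≤ ℓ x) (c : ℝ) :
    ∫⁻ x, ENNReal.ofReal (Real.exp (c * x)) * ℓ x < ⊤ ↔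
      c < 0 ∧ ∫⁻ x in Iio 0, ENNReal.ofReal (Real.exp (c * x)) * ℓ x < ⊤ := by
  rw [← lintegral_add_compl _ measurableSet_Iio, compl_Iio, ENNReal.add_lt_top]
  refine ⟨fun ⟨hIio, hIci⟩ => ⟨?_, hIio⟩, fun ⟨hc, hIio⟩ => ⟨hIio, ?_⟩⟩
  · by_contra! hc
    exact hIci.ne (setLIntegral_Ici_exp_mul_eq_top hc hδ hδℓ)
  · exact setLIntegral_Ici_exp_mul_lt_top hc hL hℓL

/-- **Lemmas 3.4 & 3.7.** For the Koenigs map `h` of a hyperbolic semigroup with Koenigs domain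
`Ω` (convex in the positive direction, contained in a horizontal strip), a nonzero `λ` satisfies
`D(e^{λh}) < ∞` iff `Re λ < 0` and `∫_{-∞}^0 e^{2 Re λ · x} ℓ_Ω(x) dx < ∞`. -/
theorem dirichlet_spectrum_slice_length_criterion
    (Ω : Set ℂ) (hopen : IsOpen Ω) (hconn : IsConnected Ω)
    (hconv : ConvexPosDir Ω)
    (hstrip : ∃ a b : ℝ, Ω ⊆ {w : ℂ | a < w.im ∧ w.im < b})
    (h : ℂ → ℂ) (hKoenigs : IsKoenigsMap h Ω)
    (lam : ℂ) (hlam : lam ≠ 0) :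
    dirichletIntegral (fun z => Complex.exp (lam * h z)) < ⊤ ↔
      (lam.re < 0 ∧
        ∫⁻ x in Iio (0 : ℝ),
          ENNReal.ofReal (Real.exp (2 * lam.re * x)) * sliceLen Ω x < ⊤) := by
  obtain ⟨hd, hinj, himg⟩ := hKoenigs
  obtain ⟨a, b, hab⟩ := hstrip
  obtain ⟨w₀, hw₀⟩ := hconn.nonempty
  obtain ⟨r, hr, hball⟩ := Metric.isOpen_iff.1 hopen w₀ hw₀
  have hR : ∀ w ∈ Ω, |w.im| ≤ max |a| |b| := fun w hw =>
    abs_le_max_abs_abs (hab hw).1.le (hab hw).2.le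
  have hscale (I : ℝ≥0∞) : ENNReal.ofReal (Complex.normSq lam) * I < ⊤ ↔ I < ⊤ :=
    ⟨fun hlt => ENNReal.lt_top_of_mul_ne_top_right hlt.ne
        (ENNReal.ofReal_pos.2 (Complex.normSq_pos.2 hlam)).ne',
      ENNReal.mul_lt_top ENNReal.ofReal_lt_top⟩
  have hfubini := setLIntegral_comp_re_eq_lintegral_mul_sliceLen hopen.measurableSet
    (g := fun x => ENNReal.ofReal (Real.exp (2 * lam.re * x))) (by fun_prop)
  rw [dirichletIntegral_exp_const_mul hd hinj, himg, hscale,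
    setLIntegral_exp_re_mul_lt_top_iff hopen.measurableSet hR, hfubini,
    lintegral_exp_mul_lt_top_iff ENNReal.ofReal_ne_top (sliceLen_le_of_subset_strip hab)
      (by simpa using hr) fun x => hconv.ofReal_two_mul_le_sliceLen hball,
    show 2 * lam.re < 0 ↔ lam.re < 0 by simp [mul_neg_iff]]
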